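/- Let m ≥ 1 be an integer and γ ∈ (0,1). If Y is a Poisson random variable with parameter γm, then the expected excess over m satisfies E[[Y − m]⁺] ≤ (1/√(2π)) · m · (γ·e^{1−γ})^m, i.e. Σ_{k=m}^{∞} (k−m)·(γm)^k e^{−γm}/k! ≤ (1/√(2π)) · m · (γ e^{1−γ})^m. -/

import Mathlib

/-!
With `q k = x ^ k / k!`, the identity `(k + 1) q (k + 1) = x q k` turns `∑ (k - m)⁺ q k` into
`x q m + (x - m) ∑_{k > m} q k`, which is at most `x q m` when `0 ≤ x ≤ m`. For `x = γ m`,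
Stirling's lower bound `m! ≥ √(2π m) (m / e) ^ m` then gives `e^{-γ m} q m ≤ (γ e^{1 - γ}) ^ m / √(2π)`.
-/

open Real Nat

lemma succ_mul_pow_div_factorial_succ (x : ℝ) (n : ℕ) :
    ((n + 1 : ℕ) : ℝ) * (x ^ (n + 1) / (n + 1)!) = x * (x ^ n / n !) := by
  rw [factorial_succ, pow_succ]
  push_cast
  field_simp

lemma tsum_max_sub_mul_pow_div_factorial (x : ℝ) (m : ℕ) :
    ∑' k : ℕ, max ((k : ℝ) - m) 0 * (x ^ k / k !) =
      x * (x ^ m / m !) + (x - m) * ∑' i : ℕ, x ^ (i + m + 1) / (i + m + 1)! := by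
  set q : ℕ → ℝ := fun k => x ^ k / (k)!
  set f : ℕ → ℝ := fun k => max ((k : ℝ) - m) 0 * q k
  have hq : Summable q := Real.summable_pow_div_factorial x
  have hq₀ : Summable fun i => q (i + m) := (summable_nat_add_iff m).mpr hq
  have hq₁ : Summable fun i => q (i + m + 1) := (summable_nat_add_iff (m + 1)).mpr hq
  have hshift (i : ℕ) : f (i + (m + 1)) = x * q (i + m) - m * q (i + m + 1) := by
    have h := succ_mul_pow_div_factorial_succ x (i + m)
    simp only [f, q, ← add_assoc] at h ⊢
    rw [max_eq_left (by push_cast; linarith)]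
    push_cast at h ⊢
    linear_combination h
  have hvanish : ∑ k ∈ Finset.range (m + 1), f k = 0 :=
    Finset.sum_eq_zero fun k hk => by
      have hkm : (k : ℝ) ≤ m := by exact_mod_cast Finset.mem_range_succ_iff.mp hk
      simp only [f, max_eq_right (sub_nonpos.mpr hkm), zero_mul]
  have hf : Summable f := by
    refine (summable_nat_add_iff (m + 1)).mp ?_
    simp_rw [hshift]
    exact (hq₀.mul_left x).sub (hq₁.mul_left (m : ℝ))
  rw [← hf.sum_add_tsum_nat_add (m + 1), hvanish, zero_add, tsum_congr hshift,
    (hq₀.mul_left x).tsum_sub (hq₁.mul_left (m : ℝ)), tsum_mul_left, tsum_mul_left,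
    hq₀.tsum_eq_zero_add]
  simp only [q, zero_add, add_right_comm _ m 1]
  ring

lemma tsum_max_sub_mul_pow_div_factorial_le {x : ℝ} {m : ℕ} (hx : 0 ≤ x) (hxm : x ≤ m) :
    ∑' k : ℕ, max ((k : ℝ) - m) 0 * (x ^ k / k !) ≤ x * (x ^ m / m !) := by
  rw [tsum_max_sub_mul_pow_div_factorial]
  have htail : 0 ≤ ∑' i : ℕ, x ^ (i + m + 1) / (i + m + 1)! := tsum_nonneg fun i => by positivity
  nlinarith

lemma exp_neg_mul_pow_div_factorial_le {γ : ℝ} (hγ : 0 ≤ γ) {m : ℕ} (hm : m ≠ 0) :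
    exp (-(γ * m)) * ((γ * m) ^ m / m !) ≤ (γ * exp (1 - γ)) ^ m / √(2 * π) := by
  have hstirling : √(2 * π) * (m / exp 1) ^ m ≤ m ! :=
    calc √(2 * π) * (m / exp 1) ^ m
        ≤ √(2 * π * m) * (m / exp 1) ^ m := by
          have hm₁ : (1 : ℝ) ≤ m := by exact_mod_cast Nat.one_le_iff_ne_zero.mpr hm
          gcongr √?_ * _
          exact le_mul_of_one_le_right (by positivity) hm₁
      _ ≤ m ! := Stirling.le_factorial_stirling m
  have hexp : exp (-(γ * m)) * (γ * m) ^ m = (γ * exp (1 - γ)) ^ m * (m / exp 1) ^ m := by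
    rw [mul_pow, mul_pow, div_pow, ← exp_nat_mul, ← exp_nat_mul]
    field_simp
    rw [mul_right_comm, ← exp_add]
    ring_nf
  rw [← mul_div_assoc, hexp, div_le_div_iff₀ (by positivity) (by positivity)]
  calc (γ * exp (1 - γ)) ^ m * (m / exp 1) ^ m * √(2 * π)
      = (γ * exp (1 - γ)) ^ m * (√(2 * π) * (m / exp 1) ^ m) := by ring
    _ ≤ (γ * exp (1 - γ)) ^ m * m ! := by gcongr

/-- Expected excess of a Poisson(γm) variable over m. -/
theorem stmt_1 (m : ℕ) (hm : 1 ≤ m) (γ : ℝ) (hγ : γ ∈ Set.Ioo (0:ℝ) 1) :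
    ∑' k : ℕ, max ((k : ℝ) - m) 0 * (γ * m) ^ k * Real.exp (-(γ * m)) / (Nat.factorial k)
      ≤ (1 / Real.sqrt (2 * Real.pi)) * m * (γ * Real.exp (1 - γ)) ^ m := by
  obtain ⟨hγ₀, hγ₁⟩ := hγ
  have hγm : γ * m ≤ m := mul_le_of_le_one_left (Nat.cast_nonneg m) hγ₁.le
  have hexcess := tsum_max_sub_mul_pow_div_factorial_le (by positivity) hγm
  have hpmf := exp_neg_mul_pow_div_factorial_le hγ₀.le (Nat.one_le_iff_ne_zero.mp hm)
  calc ∑' k : ℕ, max ((k : ℝ) - m) 0 * (γ * m) ^ k * exp (-(γ * m)) / k !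
      = exp (-(γ * m)) * ∑' k : ℕ, max ((k : ℝ) - m) 0 * ((γ * m) ^ k / k !) := by
        rw [← tsum_mul_left]
        exact tsum_congr fun k => by ring
    _ ≤ exp (-(γ * m)) * (γ * m * ((γ * m) ^ m / m !)) := by gcongr
    _ ≤ m * (exp (-(γ * m)) * ((γ * m) ^ m / m !)) := by
        rw [mul_left_comm]
        gcongr
    _ ≤ m * ((γ * exp (1 - γ)) ^ m / √(2 * π)) := by gcongr
    _ = 1 / √(2 * π) * m * (γ * exp (1 - γ)) ^ m := by ring
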